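/- Under the stated assumptions, regarding the true period as a function P(y₀) of the initial displacement, one has lim_{y₀ → 0⁺} P(y₀) = P̄, where P̄ = 2π/√(2T/(mL)) is Rayleigh's approximate period; i.e., the true period converges to Rayleigh's approximate period as the initial displacement tends to zero. -/

import Mathlib

open Real MeasureTheory intervalIntegral Filter Topology Set

/-!
For `0 ≤ y ≤ y₀` the quantity `2 / (√(L² + y²) + √(L² + y₀²))` lies between `1 / √(L² + y₀²)`
and `1 / L`, so the integrand is squeezed between constant multiples of `1 / √(y₀² - y²)`, whose
integral over `[0, y₀]` is `π / 2` (its primitive is `arcsin (y / y₀)`). Both constants tend to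
`(1 / L₀ - 1 / L)^(-1/2)` as `y₀ → 0⁺`, and `4 √(m / 2σ) (1 / L₀ - 1 / L)^(-1/2) π / 2` is
Rayleigh's period `P̄`.
-/

theorem hasDerivAt_arcsin_div {a x : ℝ} (ha : 0 < a) (hx : x ∈ Ioo (-a) a) :
    HasDerivAt (fun y => arcsin (y / a)) (1 / √(a ^ 2 - x ^ 2)) x := by
  have hxa : x / a ∈ Ioo (-1) 1 := by
    rw [mem_Ioo, lt_div_iff₀ ha, div_lt_one ha]; constructor <;> linarith [hx.1, hx.2]
  refine ((hasDerivAt_arcsin hxa.1.ne' hxa.2.ne).comp x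
    ((hasDerivAt_id' x).div_const a)).congr_deriv ?_
  rw [show a ^ 2 - x ^ 2 = (1 - (x / a) ^ 2) * a ^ 2 by field_simp, sqrt_mul' _ (sq_nonneg a),
    sqrt_sq ha.le]
  simp [mul_comm]

theorem intervalIntegrable_one_div_sqrt_sq_sub_sq {a : ℝ} (ha : 0 < a) :
    IntervalIntegrable (fun y => 1 / √(a ^ 2 - y ^ 2)) volume 0 a :=
  (intervalIntegrable_iff_integrableOn_Ioc_of_le ha.le).2 <| integrableOn_deriv_of_nonneg
    (by fun_prop) (fun x hx => hasDerivAt_arcsin_div ha ⟨by linarith [hx.1], hx.2⟩)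
    (fun _ _ => by positivity)

theorem integral_one_div_sqrt_sq_sub_sq {a : ℝ} (ha : 0 < a) :
    ∫ y in (0 : ℝ)..a, 1 / √(a ^ 2 - y ^ 2) = π / 2 := by
  rw [integral_eq_sub_of_hasDerivAt_of_le ha.le (by fun_prop)
    (fun x hx => hasDerivAt_arcsin_div ha ⟨by linarith [hx.1], hx.2⟩)
    (intervalIntegrable_one_div_sqrt_sq_sub_sq ha)]
  simp [div_self ha.ne']

theorem integral_mul_one_div_sqrt_sq_sub_sq_mem_Icc {a lo hi : ℝ} {h : ℝ → ℝ} (ha : 0 < a)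
    (hcont : ContinuousOn h (Icc 0 a)) (hbound : ∀ y ∈ Icc 0 a, h y ∈ Icc lo hi) :
    ∫ y in (0 : ℝ)..a, h y * (1 / √(a ^ 2 - y ^ 2)) ∈ Icc (lo * (π / 2)) (hi * (π / 2)) := by
  have hw := intervalIntegrable_one_div_sqrt_sq_sub_sq ha
  have hhw := hw.continuousOn_mul (uIcc_of_le ha.le ▸ hcont)
  rw [← integral_one_div_sqrt_sq_sub_sq ha, ← intervalIntegral.integral_const_mul,
    ← intervalIntegral.integral_const_mul]
  exact ⟨integral_mono_on ha.le (hw.const_mul lo) hhw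
      fun y hy => mul_le_mul_of_nonneg_right (hbound y hy).1 (by positivity),
    integral_mono_on ha.le hhw (hw.const_mul hi)
      fun y hy => mul_le_mul_of_nonneg_right (hbound y hy).2 (by positivity)⟩

theorem two_div_sqrt_add_sqrt_mem_Icc {L y y₀ : ℝ} (hL : 0 < L) (hy : y ^ 2 ≤ y₀ ^ 2) :
    2 / (√(L ^ 2 + y ^ 2) + √(L ^ 2 + y₀ ^ 2)) ∈ Icc (√(L ^ 2 + y₀ ^ 2))⁻¹ L⁻¹ := by
  have hLy : L ≤ √(L ^ 2 + y ^ 2) := le_sqrt_of_sq_le (by nlinarith)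
  have hyy₀ : √(L ^ 2 + y ^ 2) ≤ √(L ^ 2 + y₀ ^ 2) := sqrt_le_sqrt (by linarith)
  constructor
  · rw [inv_eq_one_div, div_le_div_iff₀ (by linarith) (by linarith)]; linarith
  · rw [inv_eq_one_div, div_le_div_iff₀ (by linarith) hL]; linarith

theorem integral_rayleigh_mem_Icc {L₀ L y₀ : ℝ} (hL₀ : 0 < L₀) (hLL : L₀ < L) (hy₀ : 0 < y₀) :
    ∫ y in (0 : ℝ)..y₀, 1 / (√(y₀ ^ 2 - y ^ 2) *
        √(1 / L₀ - 2 / (√(L ^ 2 + y ^ 2) + √(L ^ 2 + y₀ ^ 2)))) ∈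
      Icc ((√(1 / L₀ - (√(L ^ 2 + y₀ ^ 2))⁻¹))⁻¹ * (π / 2)) ((√(1 / L₀ - L⁻¹))⁻¹ * (π / 2)) := by
  have hL : 0 < L := hL₀.trans hLL
  have hc : 0 < 1 / L₀ - L⁻¹ := by rw [one_div, sub_pos]; exact inv_strictAnti₀ hL₀ hLL
  set g := fun y => 1 / L₀ - 2 / (√(L ^ 2 + y ^ 2) + √(L ^ 2 + y₀ ^ 2))
  have hg : ∀ y ∈ Icc 0 y₀, g y ∈ Icc (1 / L₀ - L⁻¹) (1 / L₀ - (√(L ^ 2 + y₀ ^ 2))⁻¹) :=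
    fun y hy => by
      obtain ⟨hlo, hhi⟩ :=
        two_div_sqrt_add_sqrt_mem_Icc (y₀ := y₀) hL (by nlinarith [hy.1, hy.2] : y ^ 2 ≤ y₀ ^ 2)
      exact ⟨by linarith, by linarith⟩
  have hg_pos : ∀ y ∈ Icc 0 y₀, 0 < g y := fun y hy => hc.trans_le (hg y hy).1
  have hcont : ContinuousOn (fun y => (√(g y))⁻¹) (Icc 0 y₀) :=
    ContinuousOn.inv₀ (by fun_prop (disch := intros; positivity))
      fun y hy => (sqrt_pos.2 (hg_pos y hy)).ne'
  simp_rw [one_div (_ * _), mul_inv, mul_comm (√(y₀ ^ 2 - _))⁻¹, ← one_div (√(y₀ ^ 2 - _))]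
  exact integral_mul_one_div_sqrt_sq_sub_sq_mem_Icc hy₀ hcont fun y hy =>
    ⟨inv_anti₀ (sqrt_pos.2 (hg_pos y hy)) (sqrt_le_sqrt (hg y hy).2),
      inv_anti₀ (sqrt_pos.2 hc) (sqrt_le_sqrt (hg y hy).1)⟩

theorem rayleigh_period_tendsto_approx
    (σ m L₀ L T Pbar : ℝ)
    (hσ : 0 < σ) (hm : 0 < m) (hL₀ : 0 < L₀) (hL : 0 < L)
    (hLL : L₀ < L)
    (hT : T = σ * (L - L₀) / L₀)
    (hPbar : Pbar = 2 * Real.pi / Real.sqrt (2 * T / (m * L))) :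
    Filter.Tendsto
      (fun y₀ : ℝ => 4 * Real.sqrt (m / (2 * σ)) *
        ∫ y in (0:ℝ)..y₀,
          1 / (Real.sqrt (y₀ ^ 2 - y ^ 2) *
            Real.sqrt (1 / L₀ -
              2 / (Real.sqrt (L ^ 2 + y ^ 2) + Real.sqrt (L ^ 2 + y₀ ^ 2)))))
      (nhdsWithin 0 (Set.Ioi 0)) (nhds Pbar) := by
  have hc : 0 < 1 / L₀ - L⁻¹ := by rw [one_div, sub_pos]; exact inv_strictAnti₀ hL₀ hLL
  have hPbar' : Pbar = 4 * √(m / (2 * σ)) * ((√(1 / L₀ - L⁻¹))⁻¹ * (π / 2)) := by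
    have : 2 * T / (m * L) = (1 / L₀ - L⁻¹) / (m / (2 * σ)) := by
      rw [hT]; field_simp
    rw [hPbar, this, sqrt_div' _ (by positivity)]
    field_simp
    ring
  have hlim : Tendsto (fun y₀ => (√(1 / L₀ - (√(L ^ 2 + y₀ ^ 2))⁻¹))⁻¹) (𝓝 0)
      (𝓝 (√(1 / L₀ - L⁻¹))⁻¹) := by
    have hL' : Tendsto (fun y₀ : ℝ => √(L ^ 2 + y₀ ^ 2)) (𝓝 0) (𝓝 L) := by
      have : Continuous fun y₀ : ℝ => √(L ^ 2 + y₀ ^ 2) := by fun_prop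
      simpa [sqrt_sq hL.le] using this.tendsto 0
    exact (((hL'.inv₀ hL.ne').const_sub (1 / L₀)).sqrt).inv₀ (sqrt_pos.2 hc).ne'
  rw [hPbar']
  refine tendsto_of_tendsto_of_tendsto_of_le_of_le'
    (((hlim.mul_const _).const_mul _).mono_left nhdsWithin_le_nhds) tendsto_const_nhds ?_ ?_
  · filter_upwards [self_mem_nhdsWithin] with y₀ (hy₀ : 0 < y₀)
    gcongr
    exact (integral_rayleigh_mem_Icc hL₀ hLL hy₀).1
  · filter_upwards [self_mem_nhdsWithin] with y₀ (hy₀ : 0 < y₀)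
    gcongr
    exact (integral_rayleigh_mem_Icc hL₀ hLL hy₀).2
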